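/- For a q-form α and a p-form β with q ≤ p, the Clifford product expands as αβ = Σ_{n=0}^{q} ((-1)^{n(q-n)+⌊n/2⌋}/n!) α∧ₙβ, and βα = (-1)^{pq} Σ_{n=0}^{q} ((-1)^{n(q-n+1)+⌊n/2⌋}/n!) α∧ₙβ. -/

import Mathlib

noncomputable section
open CliffordAlgebra

variable {V : Type*} [AddCommGroup V] [Module ℝ V]

/-- The Clifford product (with respect to the quadratic form `Q`, the metric)
transported to the exterior algebra via `CliffordAlgebra.equivExterior`. -/
def cliffMul (Q : QuadraticForm ℝ V) (α β : ExteriorAlgebra ℝ V) : ExteriorAlgebra ℝ V :=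
  equivExterior Q ((equivExterior Q).symm α * (equivExterior Q).symm β)

/-- The submodule of `p`-forms: the `p`-th exterior power inside the exterior algebra. -/
def formGrade (p : ℕ) : Submodule ℝ (ExteriorAlgebra ℝ V) :=
  LinearMap.range (ExteriorAlgebra.ι ℝ : V →ₗ[ℝ] ExteriorAlgebra ℝ V) ^ p

/-- Interior contraction `v⌟ ·` of a form by the vector `v`, using the metric
(through the symmetric bilinear form associated to `Q`). -/
def contr (Q : QuadraticForm ℝ V) (v : V) :
    ExteriorAlgebra ℝ V →ₗ[ℝ] ExteriorAlgebra ℝ V :=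
  contractLeft (Q := (0 : QuadraticForm ℝ V)) (QuadraticMap.associated (R := ℝ) Q v)

variable {ι : Type*} [Fintype ι] [DecidableEq ι]

/-- The `n`-fold contracted wedge product `α∧ₙβ`, defined inductively by
`α∧₀β = α∧β` and `α∧ₙβ = (Xₐ⌟α)∧_{n-1}(X^a⌟β)` (sum over `a`), where `Xl`/`Xu`
are a dual pair of orthonormal frames. -/
def cwedge (Q : QuadraticForm ℝ V) (Xl Xu : ι → V) :
    ℕ → ExteriorAlgebra ℝ V → ExteriorAlgebra ℝ V → ExteriorAlgebra ℝ V
  | 0, α, β => α * β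
  | n + 1, α, β => ∑ a, cwedge Q Xl Xu n (contr Q (Xl a) α) (contr Q (Xu a) β)

/-- `Xl` and `Xu` are mutually dual frames for the metric. -/
def DualFrames (Q : QuadraticForm ℝ V) (Xl Xu : ι → V) : Prop :=
  (∀ i j, QuadraticMap.associated (R := ℝ) Q (Xl i) (Xu j) = if i = j then 1 else 0) ∧
  (∀ w : V, ∑ a, (QuadraticMap.associated (R := ℝ) Q w (Xu a)) • Xl a = w) ∧
  (∀ w : V, ∑ a, (QuadraticMap.associated (R := ℝ) Q w (Xl a)) • Xu a = w)

/-!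
Write a `q`-form as a sum of terms `v ∧ α'` with `α'` a `(q-1)`-form and induct on `q`. Under
`equivExterior` the Clifford product with a vector is `v ω = v ∧ ω + v⌟ω`, so
`(v ∧ α') β = v ∧ (α' β) + v⌟(α' β) - (v⌟α') β`; and since the grade involution acts on a
`p`-form by `(-1)^p`, also `ω v = (-1)^p (v ω - 2 v⌟ω)`, which gives a similar recursion for
`β (v ∧ α')`. The contracted wedge products obey
`(v ∧ α') ∧ₙ₊₁ β = (-1)^(n+1) v ∧ (α' ∧ₙ₊₁ β) + (n+1) α' ∧ₙ (v⌟β)` (this is where the duality of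
the frames enters) and `v⌟(α' ∧ₙ β) = (-1)^n (v⌟α') ∧ₙ β + (-1)^k α' ∧ₙ (v⌟β)` for a `k`-form `α'`.
Both expansions have the shape `Σₙ cₙ(s) α ∧ₙ β` with `cₙ(s) = (-1)^(n(s-n)+⌊n/2⌋)/n!`, for
`s = q` and `s = q + 1` respectively, and the recursions match because `cₙ(s+1) = (-1)^n cₙ(s)`
and `(n+1) cₙ₊₁(s+1) = (-1)^s cₙ(s)`.
-/

section formGrade

theorem mem_formGrade_zero {x : ExteriorAlgebra ℝ V} :
    x ∈ formGrade 0 ↔ ∃ r : ℝ, algebraMap ℝ _ r = x := by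
  rw [formGrade, pow_zero, Submodule.mem_one]

theorem ι_mul_mem_formGrade (v : V) {k : ℕ} {x : ExteriorAlgebra ℝ V} (hx : x ∈ formGrade k) :
    ExteriorAlgebra.ι ℝ v * x ∈ formGrade (k + 1) := by
  rw [formGrade, pow_succ']
  exact Submodule.mul_mem_mul (LinearMap.mem_range_self _ v) hx

@[elab_as_elim]
theorem formGrade_succ_induction {k : ℕ}
    {P : (x : ExteriorAlgebra ℝ V) → x ∈ formGrade (k + 1) → Prop}
    (ι_mul : ∀ (v : V) (x) (hx : x ∈ formGrade k),
      P (ExteriorAlgebra.ι ℝ v * x) (ι_mul_mem_formGrade v hx))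
    (add : ∀ x hx y hy, P x hx → P y hy → P (x + y) (add_mem hx hy))
    {x : ExteriorAlgebra ℝ V} (hx : x ∈ formGrade (k + 1)) : P x hx := by
  have hsucc : formGrade (V := V) (k + 1) = LinearMap.range (ExteriorAlgebra.ι ℝ) * formGrade k :=
    pow_succ' _ _
  have key : ∀ x (h : x ∈ LinearMap.range (ExteriorAlgebra.ι ℝ) * formGrade k),
      P x (hsucc ▸ h) := by
    intro x h
    induction h using Submodule.mul_induction_on' with
    | mem_mul_mem _ hm y hy => obtain ⟨v, rfl⟩ := hm; exact ι_mul v y hy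
    | add x _ y _ h₁ h₂ => exact add x _ y _ h₁ h₂
  exact key x (hsucc ▸ hx)

end formGrade

section contr

variable (Q : QuadraticForm ℝ V)

theorem contr_ι_mul (v w : V) (x : ExteriorAlgebra ℝ V) :
    contr Q v (ExteriorAlgebra.ι ℝ w * x)
      = QuadraticMap.associated Q v w • x - ExteriorAlgebra.ι ℝ w * contr Q v x :=
  contractLeft_ι_mul _ _ _

theorem contr_algebraMap (v : V) (r : ℝ) : contr Q v (algebraMap ℝ _ r) = 0 :=
  contractLeft_algebraMap _ _ r

theorem contr_comm (v w : V) (x : ExteriorAlgebra ℝ V) :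
    contr Q v (contr Q w x) = -contr Q w (contr Q v x) :=
  contractLeft_comm _ _ _

theorem contr_eq_zero_of_mem_formGrade_zero (v : V) {x : ExteriorAlgebra ℝ V}
    (hx : x ∈ formGrade 0) : contr Q v x = 0 := by
  obtain ⟨r, rfl⟩ := mem_formGrade_zero.mp hx
  exact contr_algebraMap Q v r

theorem contr_mem_formGrade (v : V) {k : ℕ} {x : ExteriorAlgebra ℝ V}
    (hx : x ∈ formGrade (k + 1)) : contr Q v x ∈ formGrade k := by
  induction hx using formGrade_succ_induction with
  | add _ _ _ _ h₁ h₂ => rw [map_add]; exact add_mem h₁ h₂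
  | ι_mul w y hy =>
    rw [contr_ι_mul]
    refine sub_mem (Submodule.smul_mem _ _ hy) ?_
    cases k with
    | zero => rw [contr_eq_zero_of_mem_formGrade_zero Q v hy, mul_zero]; exact zero_mem _
    | succ k => exact ι_mul_mem_formGrade w (contr_mem_formGrade v hy)

theorem contr_mem_formGrade_pred (v : V) {k : ℕ} {x : ExteriorAlgebra ℝ V}
    (hx : x ∈ formGrade k) : contr Q v x ∈ formGrade (k - 1) := by
  cases k with
  | zero => rw [contr_eq_zero_of_mem_formGrade_zero Q v hx]; exact zero_mem _
  | succ k => exact contr_mem_formGrade Q v hx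

theorem contr_mul (v : V) {k : ℕ} {x : ExteriorAlgebra ℝ V} (hx : x ∈ formGrade k)
    (y : ExteriorAlgebra ℝ V) :
    contr Q v (x * y) = contr Q v x * y + (-1 : ℝ) ^ k • (x * contr Q v y) := by
  induction k generalizing x y with
  | zero =>
    obtain ⟨r, rfl⟩ := mem_formGrade_zero.mp hx
    simp only [contr_algebraMap, zero_mul, zero_add, pow_zero, one_smul, ← Algebra.smul_def,
      map_smul]
  | succ k ih =>
    induction hx using formGrade_succ_induction generalizing y with
    | ι_mul w x hx =>
      rw [mul_assoc, contr_ι_mul, ih hx, contr_ι_mul]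
      simp only [mul_add, sub_mul, smul_mul_assoc, mul_smul_comm, pow_succ, mul_neg_one,
        neg_smul, mul_assoc]
      abel
    | add x₁ _ x₂ _ h₁ h₂ =>
      simp only [add_mul, map_add, h₁, h₂, smul_add]
      abel

end contr

section cwedge

variable {κ : Type*} [Fintype κ] (Q : QuadraticForm ℝ V) (Xl Xu : κ → V)

def cwedgeBilin : ℕ → ExteriorAlgebra ℝ V →ₗ[ℝ] ExteriorAlgebra ℝ V →ₗ[ℝ] ExteriorAlgebra ℝ V
  | 0 => LinearMap.mul ℝ _
  | n + 1 => ∑ a, (cwedgeBilin n).compl₁₂ (contr Q (Xl a)) (contr Q (Xu a))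

theorem cwedgeBilin_apply (n : ℕ) (α β : ExteriorAlgebra ℝ V) :
    cwedgeBilin Q Xl Xu n α β = cwedge Q Xl Xu n α β := by
  induction n generalizing α β with
  | zero => rfl
  | succ n ih => simp [cwedgeBilin, cwedge, ih]

section linearity

variable (n : ℕ) (α α' β : ExteriorAlgebra ℝ V)

theorem cwedge_add_left :
    cwedge Q Xl Xu n (α + α') β = cwedge Q Xl Xu n α β + cwedge Q Xl Xu n α' β := by
  simp only [← cwedgeBilin_apply, map_add, LinearMap.add_apply]

theorem cwedge_sub_left :
    cwedge Q Xl Xu n (α - α') β = cwedge Q Xl Xu n α β - cwedge Q Xl Xu n α' β := by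
  simp only [← cwedgeBilin_apply, map_sub, LinearMap.sub_apply]

theorem cwedge_smul_left (c : ℝ) : cwedge Q Xl Xu n (c • α) β = c • cwedge Q Xl Xu n α β := by
  simp only [← cwedgeBilin_apply, map_smul, LinearMap.smul_apply]

theorem cwedge_neg_left : cwedge Q Xl Xu n (-α) β = -cwedge Q Xl Xu n α β := by
  simp only [← cwedgeBilin_apply, map_neg, LinearMap.neg_apply]

theorem cwedge_zero_left : cwedge Q Xl Xu n 0 β = 0 := by
  simp only [← cwedgeBilin_apply, map_zero, LinearMap.zero_apply]

theorem cwedge_smul_right (c : ℝ) : cwedge Q Xl Xu n α (c • β) = c • cwedge Q Xl Xu n α β := by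
  simp only [← cwedgeBilin_apply, map_smul]

theorem cwedge_neg_right : cwedge Q Xl Xu n α (-β) = -cwedge Q Xl Xu n α β := by
  simp only [← cwedgeBilin_apply, map_neg]

theorem cwedge_zero_right : cwedge Q Xl Xu n α 0 = 0 := by
  simp only [← cwedgeBilin_apply, map_zero]

theorem cwedge_sum_right {σ : Type*} (s : Finset σ) (f : σ → ExteriorAlgebra ℝ V) :
    cwedge Q Xl Xu n α (∑ i ∈ s, f i) = ∑ i ∈ s, cwedge Q Xl Xu n α (f i) := by
  simp only [← cwedgeBilin_apply, map_sum]

end linearity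

theorem sum_associated_smul_contr [DecidableEq κ] (hX : DualFrames Q Xl Xu) (v : V)
    (β : ExteriorAlgebra ℝ V) :
    ∑ a, QuadraticMap.associated Q (Xl a) v • contr Q (Xu a) β = contr Q v β := by
  conv_rhs => rw [← hX.2.2 v]
  simp only [contr, map_sum, map_smul, LinearMap.sum_apply, LinearMap.smul_apply,
    QuadraticMap.associated_isSymm ℝ Q v]

theorem cwedge_zero_ι_mul (v : V) (α β : ExteriorAlgebra ℝ V) :
    cwedge Q Xl Xu 0 (ExteriorAlgebra.ι ℝ v * α) β
      = ExteriorAlgebra.ι ℝ v * cwedge Q Xl Xu 0 α β :=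
  mul_assoc _ _ _

theorem cwedge_succ (n : ℕ) (α β : ExteriorAlgebra ℝ V) :
    cwedge Q Xl Xu (n + 1) α β = ∑ a, cwedge Q Xl Xu n (contr Q (Xl a) α) (contr Q (Xu a) β) :=
  rfl

theorem cwedge_succ_ι_mul [DecidableEq κ] (hX : DualFrames Q Xl Xu) (v : V) (n : ℕ)
    (α β : ExteriorAlgebra ℝ V) :
    cwedge Q Xl Xu (n + 1) (ExteriorAlgebra.ι ℝ v * α) β
      = (-1 : ℝ) ^ (n + 1) • (ExteriorAlgebra.ι ℝ v * cwedge Q Xl Xu (n + 1) α β)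
        + ((n : ℝ) + 1) • cwedge Q Xl Xu n α (contr Q v β) := by
  have hframe : ∀ m α β, ∑ a, cwedge Q Xl Xu m (QuadraticMap.associated Q (Xl a) v • α)
      (contr Q (Xu a) β) = cwedge Q Xl Xu m α (contr Q v β) := fun m α β => by
    simp only [cwedge_smul_left, ← cwedge_smul_right, ← cwedge_sum_right,
      sum_associated_smul_contr Q Xl Xu hX]
  induction n generalizing α β with
  | zero =>
    simp only [cwedge_succ, contr_ι_mul, cwedge_sub_left, Finset.sum_sub_distrib, hframe,
      cwedge_zero_ι_mul, ← Finset.mul_sum]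
    module
  | succ n ih =>
    rw [cwedge_succ]
    simp only [contr_ι_mul, cwedge_sub_left, Finset.sum_sub_distrib, hframe, ih,
      contr_comm Q v (Xu _), cwedge_neg_right, Finset.sum_add_distrib, ← Finset.smul_sum,
      ← Finset.mul_sum, Finset.sum_neg_distrib]
    rw [← cwedge_succ, ← cwedge_succ]
    push_cast
    module

theorem cwedge_eq_zero_of_lt {n k : ℕ} {α : ExteriorAlgebra ℝ V} (hα : α ∈ formGrade k)
    (hkn : k < n) (β : ExteriorAlgebra ℝ V) : cwedge Q Xl Xu n α β = 0 := by
  induction n generalizing k α β with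
  | zero => omega
  | succ n ih =>
    refine Finset.sum_eq_zero fun a _ => ?_
    cases k with
    | zero => rw [contr_eq_zero_of_mem_formGrade_zero Q _ hα, cwedge_zero_left]
    | succ k => exact ih (contr_mem_formGrade Q _ hα) (by omega) _

theorem contr_cwedge (v : V) (n : ℕ) {k : ℕ} {α : ExteriorAlgebra ℝ V} (hα : α ∈ formGrade k)
    (β : ExteriorAlgebra ℝ V) :
    contr Q v (cwedge Q Xl Xu n α β)
      = (-1 : ℝ) ^ n • cwedge Q Xl Xu n (contr Q v α) β
        + (-1 : ℝ) ^ k • cwedge Q Xl Xu n α (contr Q v β) := by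
  induction n generalizing k α β with
  | zero => exact (contr_mul Q v hα β).trans (by rw [pow_zero, one_smul]; rfl)
  | succ n ih =>
    cases k with
    | zero =>
      simp only [cwedge_eq_zero_of_lt Q Xl Xu hα n.succ_pos, cwedge_zero_left, map_zero,
        contr_eq_zero_of_mem_formGrade_zero Q v hα, smul_zero, add_zero]
    | succ k =>
      simp only [cwedge_succ, map_sum, ih (contr_mem_formGrade Q _ hα), contr_comm Q v,
        cwedge_neg_left, cwedge_neg_right, Finset.sum_add_distrib, ← Finset.smul_sum,
        Finset.sum_neg_distrib, pow_succ]
      module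

end cwedge

section involute

variable {R M : Type*} [CommRing R] [AddCommGroup M] [Module R M] {Q : QuadraticForm R M}

theorem contractLeft_involute (d : Module.Dual R M) (x : CliffordAlgebra Q) :
    contractLeft d (involute x) = -involute (contractLeft d x) := by
  induction x using CliffordAlgebra.left_induction with
  | algebraMap r => simp only [AlgHom.commutes, contractLeft_algebraMap, map_zero, neg_zero]
  | add x y hx hy => simp only [map_add, hx, hy, neg_add]
  | ι_mul x m hx =>
    simp only [map_mul, involute_ι, neg_mul, map_neg, contractLeft_ι_mul, hx, map_sub, map_smul,
      mul_neg, sub_neg_eq_add]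

theorem ι_mul_eq_involute_mul_add_contractLeft (v : M) (x : CliffordAlgebra Q) :
    CliffordAlgebra.ι Q v * x
      = involute x * CliffordAlgebra.ι Q v + contractLeft (QuadraticMap.polarBilin Q v) x := by
  induction x using CliffordAlgebra.left_induction with
  | algebraMap r => simp [Algebra.commutes]
  | add x y hx hy => simp only [mul_add, hx, hy, map_add, add_mul]; abel
  | ι_mul x w hx =>
    have hswap : CliffordAlgebra.ι Q v * CliffordAlgebra.ι Q w
        = algebraMap R _ (QuadraticMap.polar Q v w)
          - CliffordAlgebra.ι Q w * CliffordAlgebra.ι Q v :=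
      eq_sub_of_add_eq (ι_mul_ι_add_swap v w)
    rw [← mul_assoc, hswap, sub_mul, mul_assoc, hx, map_mul, involute_ι, contractLeft_ι_mul,
      ← Algebra.smul_def, QuadraticMap.polarBilin_apply_apply]
    simp only [mul_add, neg_mul, mul_assoc]
    abel

end involute

section transport

variable (Q : QuadraticForm ℝ V)

theorem equivExterior_apply (x : CliffordAlgebra Q) :
    equivExterior Q x = changeForm changeForm.associated_neg_proof x :=
  rfl

theorem equivExterior_ι_mul (v : V) (x : CliffordAlgebra Q) :
    equivExterior Q (CliffordAlgebra.ι Q v * x)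
      = ExteriorAlgebra.ι ℝ v * equivExterior Q x + contr Q v (equivExterior Q x) := by
  simp only [equivExterior_apply, changeForm_ι_mul, contr, map_neg, LinearMap.neg_apply,
    sub_neg_eq_add]

theorem equivExterior_contractLeft (v : V) (x : CliffordAlgebra Q) :
    equivExterior Q (contractLeft (QuadraticMap.associated Q v) x)
      = contr Q v (equivExterior Q x) :=
  changeForm_contractLeft changeForm.associated_neg_proof _ _

theorem equivExterior_algebraMap (r : ℝ) :
    equivExterior Q (algebraMap ℝ _ r) = algebraMap ℝ _ r :=
  changeForm_algebraMap changeForm.associated_neg_proof r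

theorem equivExterior_symm_ι_mul (v : V) (ω : ExteriorAlgebra ℝ V) :
    (equivExterior Q).symm (ExteriorAlgebra.ι ℝ v * ω)
      = CliffordAlgebra.ι Q v * (equivExterior Q).symm ω
        - (equivExterior Q).symm (contr Q v ω) := by
  apply (equivExterior Q).injective
  simp only [map_sub, equivExterior_ι_mul, LinearEquiv.apply_symm_apply, add_sub_cancel_right]

theorem equivExterior_symm_contr (v : V) (ω : ExteriorAlgebra ℝ V) :
    (equivExterior Q).symm (contr Q v ω)
      = contractLeft (QuadraticMap.associated Q v) ((equivExterior Q).symm ω) := by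
  apply (equivExterior Q).injective
  rw [equivExterior_contractLeft, LinearEquiv.apply_symm_apply, LinearEquiv.apply_symm_apply]

theorem equivExterior_symm_algebraMap (r : ℝ) :
    (equivExterior Q).symm (algebraMap ℝ _ r) = algebraMap ℝ (CliffordAlgebra Q) r := by
  apply (equivExterior Q).injective
  rw [LinearEquiv.apply_symm_apply, equivExterior_algebraMap]

theorem involute_equivExterior_symm {p : ℕ} {β : ExteriorAlgebra ℝ V} (hβ : β ∈ formGrade p) :
    involute ((equivExterior Q).symm β) = (-1 : ℝ) ^ p • (equivExterior Q).symm β := by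
  induction p generalizing β with
  | zero =>
    obtain ⟨r, rfl⟩ := mem_formGrade_zero.mp hβ
    rw [equivExterior_symm_algebraMap, AlgHom.commutes, pow_zero, one_smul]
  | succ p ih =>
    induction hβ using formGrade_succ_induction with
    | ι_mul v β hβ =>
      rw [equivExterior_symm_ι_mul, equivExterior_symm_contr, map_sub, map_mul, involute_ι,
        ← neg_neg (involute (contractLeft _ _)), ← contractLeft_involute, ih hβ]
      simp only [map_smul, neg_mul, mul_smul_comm, pow_succ]
      module
    | add x _ y _ hx hy => rw [map_add, map_add, hx, hy, smul_add]

theorem equivExterior_symm_mul_ι {p : ℕ} {β : ExteriorAlgebra ℝ V} (hβ : β ∈ formGrade p)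
    (v : V) :
    (equivExterior Q).symm β * CliffordAlgebra.ι Q v
      = (-1 : ℝ) ^ p • (CliffordAlgebra.ι Q v * (equivExterior Q).symm β
          - (2 : ℝ) • (equivExterior Q).symm (contr Q v β)) := by
  have hpolar : QuadraticMap.polarBilin Q v = (2 : ℝ) • QuadraticMap.associated Q v := by
    rw [← QuadraticMap.two_nsmul_associated ℝ, ofNat_smul_eq_nsmul (R := ℝ)]
    rfl
  rw [ι_mul_eq_involute_mul_add_contractLeft, hpolar, map_smul, LinearMap.smul_apply,
    ← equivExterior_symm_contr, add_sub_cancel_right, involute_equivExterior_symm Q hβ,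
    smul_mul_assoc, smul_smul, ← pow_add, ← two_mul, pow_mul, neg_one_sq, one_pow, one_smul]

end transport

section cliffMul

variable (Q : QuadraticForm ℝ V)

theorem cliffMul_add_left (α α' β : ExteriorAlgebra ℝ V) :
    cliffMul Q (α + α') β = cliffMul Q α β + cliffMul Q α' β := by
  simp only [cliffMul, map_add, add_mul]

theorem cliffMul_add_right (α β β' : ExteriorAlgebra ℝ V) :
    cliffMul Q α (β + β') = cliffMul Q α β + cliffMul Q α β' := by
  simp only [cliffMul, map_add, mul_add]

theorem cliffMul_algebraMap_left (r : ℝ) (β : ExteriorAlgebra ℝ V) :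
    cliffMul Q (algebraMap ℝ _ r) β = r • β := by
  rw [cliffMul, equivExterior_symm_algebraMap, ← Algebra.smul_def, map_smul,
    LinearEquiv.apply_symm_apply]

theorem cliffMul_algebraMap_right (r : ℝ) (α : ExteriorAlgebra ℝ V) :
    cliffMul Q α (algebraMap ℝ _ r) = r • α := by
  rw [cliffMul, equivExterior_symm_algebraMap, ← Algebra.commutes, ← Algebra.smul_def, map_smul,
    LinearEquiv.apply_symm_apply]

theorem cliffMul_ι_mul_left (v : V) (α β : ExteriorAlgebra ℝ V) :
    cliffMul Q (ExteriorAlgebra.ι ℝ v * α) β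
      = ExteriorAlgebra.ι ℝ v * cliffMul Q α β + contr Q v (cliffMul Q α β)
        - cliffMul Q (contr Q v α) β := by
  rw [cliffMul, equivExterior_symm_ι_mul, sub_mul, map_sub, mul_assoc, equivExterior_ι_mul,
    cliffMul, cliffMul]

theorem cliffMul_ι_mul_right {p : ℕ} {β : ExteriorAlgebra ℝ V} (hβ : β ∈ formGrade p) (v : V)
    (α : ExteriorAlgebra ℝ V) :
    cliffMul Q β (ExteriorAlgebra.ι ℝ v * α)
      = (-1 : ℝ) ^ p • (ExteriorAlgebra.ι ℝ v * cliffMul Q β α + contr Q v (cliffMul Q β α)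
          - (2 : ℝ) • cliffMul Q (contr Q v β) α)
        - cliffMul Q β (contr Q v α) := by
  rw [cliffMul, equivExterior_symm_ι_mul, mul_sub, map_sub, ← mul_assoc,
    equivExterior_symm_mul_ι Q hβ, smul_mul_assoc, sub_mul, smul_mul_assoc, mul_assoc, map_smul,
    map_sub, map_smul, equivExterior_ι_mul]
  rfl

end cliffMul

section coefficients

def cliffCoeff (n s : ℕ) : ℝ := (-1 : ℝ) ^ (n * (s - n) + n / 2) / (n.factorial : ℝ)

theorem cliffCoeff_zero_left (s : ℕ) : cliffCoeff 0 s = 1 := by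
  simp [cliffCoeff]

theorem cliffCoeff_succ_right_mul {n s : ℕ} (h : n ≤ s) :
    cliffCoeff n (s + 1) * (-1) ^ n = cliffCoeff n s := by
  obtain ⟨t, rfl⟩ := Nat.exists_eq_add_of_le h
  rw [cliffCoeff, cliffCoeff, div_mul_eq_mul_div, ← pow_add]
  congr 1
  apply neg_one_pow_congr
  rw [show n + t + 1 - n = t + 1 by omega, Nat.add_sub_cancel_left, Nat.mul_succ]
  generalize n * t = u
  simp only [Nat.even_iff]
  omega

theorem cliffCoeff_succ_succ_mul {m s : ℕ} (h : m ≤ s) :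
    cliffCoeff (m + 1) (s + 1) * ((m : ℝ) + 1) = (-1) ^ s * cliffCoeff m s := by
  obtain ⟨t, rfl⟩ := Nat.exists_eq_add_of_le h
  have hfac : ((m + 1).factorial : ℝ) = ((m : ℝ) + 1) * m.factorial := by
    rw [Nat.factorial_succ]; push_cast; ring
  have hm : (m : ℝ) + 1 ≠ 0 := by positivity
  rw [cliffCoeff, cliffCoeff, hfac, mul_div_assoc', ← pow_add, div_mul_eq_mul_div,
    mul_comm ((m : ℝ) + 1), mul_div_mul_right _ _ hm]
  congr 1
  apply neg_one_pow_congr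
  rw [show m + t + 1 - (m + 1) = t by omega, Nat.add_sub_cancel_left, Nat.succ_mul]
  generalize m * t = u
  simp only [Nat.even_iff]
  omega

end coefficients

section expansion

variable {κ : Type*} [Fintype κ] (Q : QuadraticForm ℝ V) (Xl Xu : κ → V)

def cliffExpansion (s : ℕ) (α β : ExteriorAlgebra ℝ V) : ExteriorAlgebra ℝ V :=
  ∑ n ∈ Finset.range (s + 1), cliffCoeff n s • cwedge Q Xl Xu n α β

theorem cliffExpansion_add_left (s : ℕ) (α α' β : ExteriorAlgebra ℝ V) :
    cliffExpansion Q Xl Xu s (α + α') β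
      = cliffExpansion Q Xl Xu s α β + cliffExpansion Q Xl Xu s α' β := by
  simp only [cliffExpansion, cwedge_add_left, smul_add, Finset.sum_add_distrib]

theorem cliffExpansion_zero_left (s : ℕ) (β : ExteriorAlgebra ℝ V) :
    cliffExpansion Q Xl Xu s 0 β = 0 := by
  simp only [cliffExpansion, cwedge_zero_left, smul_zero, Finset.sum_const_zero]

theorem cliffExpansion_of_mem_formGrade_zero_left (s : ℕ) {α : ExteriorAlgebra ℝ V}
    (hα : α ∈ formGrade 0) (β : ExteriorAlgebra ℝ V) :
    cliffExpansion Q Xl Xu s α β = α * β := by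
  rw [cliffExpansion, Finset.sum_range_succ', Finset.sum_eq_zero fun n _ => by
    rw [cwedge_eq_zero_of_lt Q Xl Xu hα n.succ_pos, smul_zero], zero_add, cliffCoeff_zero_left,
    one_smul]
  rfl

theorem cliffExpansion_of_mem_formGrade_zero_right (s : ℕ) (α : ExteriorAlgebra ℝ V)
    {β : ExteriorAlgebra ℝ V} (hβ : β ∈ formGrade 0) :
    cliffExpansion Q Xl Xu s α β = α * β := by
  have hvanish (n : ℕ) : cwedge Q Xl Xu (n + 1) α β = 0 := by
    simp only [cwedge_succ, contr_eq_zero_of_mem_formGrade_zero Q _ hβ, cwedge_zero_right,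
      Finset.sum_const_zero]
  rw [cliffExpansion, Finset.sum_range_succ', Finset.sum_eq_zero fun n _ => by
    rw [hvanish, smul_zero], zero_add, cliffCoeff_zero_left, one_smul]
  rfl

theorem sum_cliffCoeff_succ_mul_smul_cwedge {j s : ℕ} {γ : ExteriorAlgebra ℝ V}
    (hγ : γ ∈ formGrade j) (hjs : j ≤ s) (β : ExteriorAlgebra ℝ V) :
    ∑ n ∈ Finset.range (s + 2), (cliffCoeff n (s + 1) * (-1) ^ n) • cwedge Q Xl Xu n γ β
      = cliffExpansion Q Xl Xu s γ β := by
  rw [Finset.sum_range_succ, cwedge_eq_zero_of_lt Q Xl Xu hγ (by omega), smul_zero, add_zero]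
  refine Finset.sum_congr rfl fun n hn => ?_
  rw [cliffCoeff_succ_right_mul (by simp only [Finset.mem_range] at hn; omega)]

theorem contr_cliffExpansion (v : V) {k s : ℕ} {α : ExteriorAlgebra ℝ V} (hα : α ∈ formGrade k)
    (hks : k ≤ s) (β : ExteriorAlgebra ℝ V) :
    contr Q v (cliffExpansion Q Xl Xu s α β)
      = cliffExpansion Q Xl Xu (s - 1) (contr Q v α) β
        + (-1 : ℝ) ^ k • cliffExpansion Q Xl Xu s α (contr Q v β) := by
  have hcontr : contr Q v (cliffExpansion Q Xl Xu s α β)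
      = ∑ n ∈ Finset.range (s + 1), (cliffCoeff n s * (-1) ^ n) • cwedge Q Xl Xu n (contr Q v α) β
        + (-1 : ℝ) ^ k • cliffExpansion Q Xl Xu s α (contr Q v β) := by
    simp only [cliffExpansion, map_sum, map_smul, contr_cwedge Q Xl Xu v _ hα, smul_add,
      Finset.sum_add_distrib, Finset.smul_sum, smul_smul, mul_comm ((-1 : ℝ) ^ k)]
  rw [hcontr]
  congr 1
  cases s with
  | zero =>
    obtain rfl : k = 0 := by omega
    simp only [contr_eq_zero_of_mem_formGrade_zero Q v hα, cwedge_zero_left, smul_zero,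
      Finset.sum_const_zero, cliffExpansion_zero_left]
  | succ s =>
    exact sum_cliffCoeff_succ_mul_smul_cwedge Q Xl Xu (contr_mem_formGrade_pred Q v hα)
      (by omega) β

theorem cliffExpansion_succ_ι_mul [DecidableEq κ] (hX : DualFrames Q Xl Xu) (v : V) {k s : ℕ}
    {α : ExteriorAlgebra ℝ V} (hα : α ∈ formGrade k) (hks : k ≤ s) (β : ExteriorAlgebra ℝ V) :
    cliffExpansion Q Xl Xu (s + 1) (ExteriorAlgebra.ι ℝ v * α) β
      = ExteriorAlgebra.ι ℝ v * cliffExpansion Q Xl Xu s α β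
        + (-1 : ℝ) ^ s • cliffExpansion Q Xl Xu s α (contr Q v β) := by
  have hcontr : ∑ m ∈ Finset.range (s + 1),
      cliffCoeff (m + 1) (s + 1) • ((m : ℝ) + 1) • cwedge Q Xl Xu m α (contr Q v β)
        = (-1 : ℝ) ^ s • cliffExpansion Q Xl Xu s α (contr Q v β) := by
    rw [cliffExpansion, Finset.smul_sum]
    refine Finset.sum_congr rfl fun m hm => ?_
    rw [smul_smul, cliffCoeff_succ_succ_mul (by simp only [Finset.mem_range] at hm; omega),
      mul_smul]
  rw [← sum_cliffCoeff_succ_mul_smul_cwedge Q Xl Xu hα hks, ← hcontr, Finset.mul_sum,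
    cliffExpansion, Finset.sum_range_succ' _ (s + 1), Finset.sum_range_succ' _ (s + 1)]
  simp only [cwedge_succ_ι_mul Q Xl Xu hX, cwedge_zero_ι_mul, smul_add, Finset.sum_add_distrib,
    pow_zero, mul_one, smul_smul, mul_smul_comm]
  abel

end expansion

section products

variable {κ : Type*} [Fintype κ] [DecidableEq κ] (Q : QuadraticForm ℝ V) (Xl Xu : κ → V)

theorem cliffMul_eq_cliffExpansion (hX : DualFrames Q Xl Xu) {q : ℕ} {α : ExteriorAlgebra ℝ V}
    (hα : α ∈ formGrade q) (β : ExteriorAlgebra ℝ V) :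
    cliffMul Q α β = cliffExpansion Q Xl Xu q α β := by
  induction q using Nat.strong_induction_on generalizing α β with
  | _ q ih =>
  cases q with
  | zero =>
    rw [cliffExpansion_of_mem_formGrade_zero_left Q Xl Xu 0 hα]
    obtain ⟨r, rfl⟩ := mem_formGrade_zero.mp hα
    rw [cliffMul_algebraMap_left, Algebra.smul_def]
  | succ k =>
    induction hα using formGrade_succ_induction with
    | ι_mul v α hα =>
      rw [cliffMul_ι_mul_left, ih k (by omega) hα,
        ih (k - 1) (by omega) (contr_mem_formGrade_pred Q v hα),
        contr_cliffExpansion Q Xl Xu v hα le_rfl, cliffExpansion_succ_ι_mul Q Xl Xu hX v hα le_rfl]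
      abel
    | add α _ α' _ h h' => rw [cliffMul_add_left, h, h', cliffExpansion_add_left]

theorem cliffMul_flip_ι_mul_eq_cliffExpansion (hX : DualFrames Q Xl Xu) (v : V) {k p : ℕ}
    {α β : ExteriorAlgebra ℝ V} (hα : α ∈ formGrade k) (hβ : β ∈ formGrade (p + 1))
    (h₁ : cliffMul Q β α = (-1 : ℝ) ^ ((p + 1) * k) • cliffExpansion Q Xl Xu (k + 1) α β)
    (h₂ : cliffMul Q (contr Q v β) α
      = (-1 : ℝ) ^ (p * k) • cliffExpansion Q Xl Xu (k + 1) α (contr Q v β))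
    (h₃ : cliffMul Q β (contr Q v α)
      = (-1 : ℝ) ^ ((p + 1) * (k + 1)) • cliffExpansion Q Xl Xu k (contr Q v α) β) :
    cliffMul Q β (ExteriorAlgebra.ι ℝ v * α)
      = (-1 : ℝ) ^ ((p + 1) * (k + 1))
          • cliffExpansion Q Xl Xu (k + 2) (ExteriorAlgebra.ι ℝ v * α) β := by
  rw [cliffMul_ι_mul_right Q hβ, h₁, h₂, h₃, map_smul, contr_cliffExpansion Q Xl Xu v hα (by omega),
    cliffExpansion_succ_ι_mul Q Xl Xu hX v hα (by omega), Nat.add_sub_cancel]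
  have hk : ((-1 : ℝ) ^ k) * (-1) ^ k = 1 := by
    rw [← pow_add, ← two_mul, pow_mul, neg_one_sq, one_pow]
  simp only [mul_smul_comm]
  -- the coefficients of `α ∧ₙ (v⌟β)` agree only up to `(-1)^k (-1)^k = 1`
  linear_combination (norm := module)
    hk • (-2 * (-1) ^ p * (-1) ^ (p * k) : ℝ) • cliffExpansion Q Xl Xu (k + 1) α (contr Q v β)

theorem cliffMul_flip_eq_cliffExpansion (hX : DualFrames Q Xl Xu) {q p : ℕ}
    {α β : ExteriorAlgebra ℝ V} (hα : α ∈ formGrade q) (hβ : β ∈ formGrade p) :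
    cliffMul Q β α = (-1 : ℝ) ^ (p * q) • cliffExpansion Q Xl Xu (q + 1) α β := by
  induction q using Nat.strong_induction_on generalizing p α β with
  | _ q ih =>
  cases p with
  | zero =>
    rw [cliffExpansion_of_mem_formGrade_zero_right Q Xl Xu _ α hβ, zero_mul, pow_zero, one_smul]
    obtain ⟨r, rfl⟩ := mem_formGrade_zero.mp hβ
    rw [cliffMul_algebraMap_left, Algebra.smul_def, Algebra.commutes]
  | succ p =>
  cases q with
  | zero =>
    rw [cliffExpansion_of_mem_formGrade_zero_left Q Xl Xu _ hα, mul_zero, pow_zero, one_smul]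
    obtain ⟨r, rfl⟩ := mem_formGrade_zero.mp hα
    rw [cliffMul_algebraMap_right, Algebra.smul_def, Algebra.commutes]
  | succ k =>
    induction hα using formGrade_succ_induction with
    | ι_mul v α hα =>
      have h₃ : cliffMul Q β (contr Q v α)
          = (-1 : ℝ) ^ ((p + 1) * (k + 1)) • cliffExpansion Q Xl Xu k (contr Q v α) β := by
        cases k with
        | zero =>
          simp only [contr_eq_zero_of_mem_formGrade_zero Q v hα, cliffMul, map_zero, mul_zero,
            cliffExpansion_zero_left, smul_zero]
        | succ j =>
          rw [ih j (by omega) (contr_mem_formGrade Q v hα) hβ]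
          congr 1
          exact neg_one_pow_congr (by simp [Nat.even_add, Nat.even_mul, parity_simps])
      exact cliffMul_flip_ι_mul_eq_cliffExpansion Q Xl Xu hX v hα hβ (ih k (by omega) hα hβ)
        (ih k (by omega) hα (contr_mem_formGrade Q v hβ)) h₃
    | add α _ α' _ h h' => rw [cliffMul_add_right, h, h', cliffExpansion_add_left, smul_add]

end products

theorem clifford_product_expansion_general (Q : QuadraticForm ℝ V) (Xl Xu : ι → V)
    (hX : DualFrames Q Xl Xu) (p q : ℕ)
    (α β : ExteriorAlgebra ℝ V) (hα : α ∈ formGrade q) (hβ : β ∈ formGrade p) :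
    cliffMul Q α β
        = ∑ n ∈ Finset.range (q + 1),
            (((-1 : ℝ)) ^ (n * (q - n) + n / 2) / (n.factorial : ℝ)) •
              cwedge Q Xl Xu n α β ∧
    cliffMul Q β α
        = ((-1 : ℝ)) ^ (p * q) • ∑ n ∈ Finset.range (q + 1),
            (((-1 : ℝ)) ^ (n * (q - n + 1) + n / 2) / (n.factorial : ℝ)) •
              cwedge Q Xl Xu n α β := by
  refine ⟨cliffMul_eq_cliffExpansion Q Xl Xu hX hα β, ?_⟩
  rw [cliffMul_flip_eq_cliffExpansion Q Xl Xu hX hα hβ, cliffExpansion, Finset.sum_range_succ,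
    cwedge_eq_zero_of_lt Q Xl Xu hα q.lt_succ_self, smul_zero, add_zero]
  refine congrArg _ (Finset.sum_congr rfl fun n hn => ?_)
  rw [cliffCoeff, show q + 1 - n = q - n + 1 by simp only [Finset.mem_range] at hn; omega]

/-- for a `q`-form `α` and a `p`-form `β` with `q ≤ p`,
`αβ = Σ_{n=0}^{q} ((-1)^{n(q-n)+⌊n/2⌋}/n!) α∧ₙβ` and
`βα = (-1)^{pq} Σ_{n=0}^{q} ((-1)^{n(q-n+1)+⌊n/2⌋}/n!) α∧ₙβ`. -/
theorem clifford_product_expansion (Q : QuadraticForm ℝ V) (Xl Xu : ι → V)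
    (hX : DualFrames Q Xl Xu) (p q : ℕ) (hqp : q ≤ p)
    (α β : ExteriorAlgebra ℝ V) (hα : α ∈ formGrade q) (hβ : β ∈ formGrade p) :
    cliffMul Q α β
        = ∑ n ∈ Finset.range (q + 1),
            (((-1 : ℝ)) ^ (n * (q - n) + n / 2) / (n.factorial : ℝ)) •
              cwedge Q Xl Xu n α β ∧
    cliffMul Q β α
        = ((-1 : ℝ)) ^ (p * q) • ∑ n ∈ Finset.range (q + 1),
            (((-1 : ℝ)) ^ (n * (q - n + 1) + n / 2) / (n.factorial : ℝ)) •
              cwedge Q Xl Xu n α β :=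
  clifford_product_expansion_general Q Xl Xu hX p q α β hα hβ
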